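/- Energy monotonicity along the semigroup: for every probability density π on ℝ^d and every t > 0, 𝓔(√(g_t ⋆ π)) ≤ 𝓔(√π). In particular, if f is even and g_{1/2} = f, so that the marginal M^π(x) = ∫_{ℝ^d} f(x−θ) π(θ) dθ equals (g_{1/2} ⋆ π)(x), then 𝓔(√(M^π)) ≤ 𝓔(√π). -/

import Mathlib

open MeasureTheory
open scoped ENNReal

noncomputable section

/-- Euclidean space ℝ^d. -/
abbrev Euc (d : ℕ) := EuclideanSpace ℝ (Fin d)

/-- The marginal density `M^π(x) = ∫ f(x−θ) π(θ) dθ`, as a value in `[0,∞]`. -/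
def margE (d : ℕ) (f prio : Euc d → ℝ) (x : Euc d) : ℝ≥0∞ :=
  ∫⁻ θ, ENNReal.ofReal (f (x - θ) * prio θ)

/-- The (real-valued) marginal density `M^π`. -/
def marg (d : ℕ) (f prio : Euc d → ℝ) (x : Euc d) : ℝ := (margE d f prio x).toReal

/-- Convolution `(g ⋆ u)(x) = ∫ g(x−z) u(z) dz`. -/
def convF (d : ℕ) (g u : Euc d → ℝ) (x : Euc d) : ℝ :=
  ∫ z, g (x - z) * u z

/-- The Dirichlet-form energy `𝓔(u) = sup_{t>0} (1/t) ∫ u (u − T_t u) ∈ [0,∞]`. -/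
def energy (d : ℕ) (g : ℝ → Euc d → ℝ) (u : Euc d → ℝ) : ℝ≥0∞ :=
  ⨆ (t : ℝ) (_ : 0 < t),
    ENNReal.ofReal ((1 / t) * ∫ x, u x * (u x - convF d (g t) u x))


/-! For `v ≥ 0` with `‖v‖₂ = 1` and a probability density `g_s`,
`∫ v (v − g_s ⋆ v) = 1 − Q_s(v)` with `Q_s(v) = ∫∫ g_s(x − y) v(x) v(y)`, so it suffices to show
`Q_s(√π) ≤ Q_s(√(g_t ⋆ π))`. By translation invariance `Q_s(√π)` equals its `g_t`-average over
translates, `∫∫ g_s(x − y) ∫ g_t(θ) √π(x − θ) √π(y − θ) dθ`, and Cauchy–Schwarz in `θ` bounds the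
inner integral by `√(g_t ⋆ π)(x) √(g_t ⋆ π)(y)`. The marginal is the case `t = 1/2`.
Everything is computed in `ℝ≥0∞`, where Tonelli needs no integrability. -/
section

variable {α : Type*} [MeasurableSpace α] {ν : Measure α}

theorem lintegral_mul_mul_le_sqrt {K A B : α → ℝ≥0∞} (hK : AEMeasurable K ν)
    (hA : AEMeasurable A ν) (hB : AEMeasurable B ν) :
    ∫⁻ x, K x * (A x * B x) ∂ν ≤
      (∫⁻ x, K x * A x ^ 2 ∂ν) ^ (1 / 2 : ℝ) * (∫⁻ x, K x * B x ^ 2 ∂ν) ^ (1 / 2 : ℝ) := by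
  have hac := withDensity_absolutelyContinuous ν K
  have := ENNReal.lintegral_mul_le_Lp_mul_Lq (ν.withDensity K) Real.HolderConjugate.two_two
    (hA.mono_ac hac) (hB.mono_ac hac)
  simp only [ENNReal.rpow_two] at this
  rwa [lintegral_withDensity_eq_lintegral_mul₀ hK (by fun_prop),
    lintegral_withDensity_eq_lintegral_mul₀ hK (by fun_prop),
    lintegral_withDensity_eq_lintegral_mul₀ hK (by fun_prop)] at this

theorem lintegral_ofReal_eq_one {h : α → ℝ} (h0 : ∀ x, 0 ≤ h x) (h1 : ∫ x, h x ∂ν = 1) :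
    ∫⁻ x, ENNReal.ofReal (h x) ∂ν = 1 := by
  rw [← ofReal_integral_eq_lintegral_ofReal (Integrable.of_integral_ne_zero (by simp [h1]))
    (ae_of_all _ h0), h1, ENNReal.ofReal_one]

end

section

variable {G : Type*} [MeasurableSpace G] [AddCommGroup G] [MeasurableAdd₂ G] [MeasurableNeg G]

noncomputable def kernelForm (μ : Measure G) (K V : G → ℝ≥0∞) : ℝ≥0∞ :=
  ∫⁻ p, K (p.1 - p.2) * (V p.1 * V p.2) ∂μ.prod μ

variable {μ : Measure G} [μ.IsAddLeftInvariant]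

theorem lintegral_translates_le [μ.IsNegInvariant] {L P : G → ℝ≥0∞} (hL : Measurable L)
    (hP : Measurable P) (x y : G) :
    ∫⁻ θ, L θ * (P (x - θ) * P (y - θ)) ∂μ ≤
      (∫⁻ z, L (x - z) * P z ^ 2 ∂μ) ^ (1 / 2 : ℝ) *
        (∫⁻ z, L (y - z) * P z ^ 2 ∂μ) ^ (1 / 2 : ℝ) := by
  have hchange (w : G) : ∫⁻ θ, L θ * P (w - θ) ^ 2 ∂μ = ∫⁻ z, L (w - z) * P z ^ 2 ∂μ := by
    simpa only [sub_sub_cancel] using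
      (lintegral_sub_left_eq_self (fun θ => L θ * P (w - θ) ^ 2) w).symm
  rw [← hchange x, ← hchange y]
  exact lintegral_mul_mul_le_sqrt hL.aemeasurable (by fun_prop) (by fun_prop)

variable [SFinite μ]

theorem lintegral_prod_sub_mul_snd {K F : G → ℝ≥0∞} (hK : Measurable K) (hF : Measurable F) :
    ∫⁻ p, K (p.1 - p.2) * F p.2 ∂μ.prod μ = (∫⁻ z, K z ∂μ) * ∫⁻ y, F y ∂μ := by
  rw [lintegral_prod_symm _ (by fun_prop), ← lintegral_const_mul _ hF]
  refine lintegral_congr fun y => ?_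
  dsimp only
  rw [lintegral_mul_const _ (by fun_prop), lintegral_sub_right_eq_self K y, mul_comm]

theorem lintegral_prod_sub_mul_fst [μ.IsNegInvariant] {K F : G → ℝ≥0∞} (hK : Measurable K)
    (hF : Measurable F) :
    ∫⁻ p, K (p.1 - p.2) * F p.1 ∂μ.prod μ = (∫⁻ z, K z ∂μ) * ∫⁻ x, F x ∂μ := by
  rw [lintegral_prod _ (by fun_prop), ← lintegral_const_mul _ hF]
  refine lintegral_congr fun x => ?_
  dsimp only
  rw [lintegral_mul_const _ (by fun_prop), lintegral_sub_left_eq_self K x, mul_comm]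

theorem kernelForm_le [μ.IsNegInvariant] {K V : G → ℝ≥0∞} (hK : Measurable K) (hV : Measurable V) :
    kernelForm μ K V ≤ (∫⁻ z, K z ∂μ) * ∫⁻ x, V x ^ 2 ∂μ := by
  calc kernelForm μ K V
      ≤ (∫⁻ p, K (p.1 - p.2) * V p.1 ^ 2 ∂μ.prod μ) ^ (1 / 2 : ℝ) *
          (∫⁻ p, K (p.1 - p.2) * V p.2 ^ 2 ∂μ.prod μ) ^ (1 / 2 : ℝ) :=
        lintegral_mul_mul_le_sqrt (by fun_prop) (by fun_prop) (by fun_prop)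
    _ = (∫⁻ z, K z ∂μ) * ∫⁻ x, V x ^ 2 ∂μ := by
        rw [lintegral_prod_sub_mul_fst (F := fun x => V x ^ 2) hK (by fun_prop),
          lintegral_prod_sub_mul_snd (F := fun x => V x ^ 2) hK (by fun_prop),
          ← ENNReal.mul_rpow_of_nonneg _ _ (by norm_num), ← sq, ← ENNReal.rpow_natCast,
          ← ENNReal.rpow_mul]
        norm_num

theorem kernelForm_comp_sub_right {K V : G → ℝ≥0∞} (hK : Measurable K) (hV : Measurable V)
    (θ : G) : kernelForm μ K (fun x => V (x - θ)) = kernelForm μ K V := by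
  rw [kernelForm, kernelForm, lintegral_prod _ (by fun_prop), lintegral_prod _ (by fun_prop),
    ← lintegral_sub_right_eq_self (fun x => ∫⁻ y, K (x - y) * (V x * V y) ∂μ) θ]
  refine lintegral_congr fun x => ?_
  conv_rhs => rw [← lintegral_sub_right_eq_self _ θ]
  simp only [sub_sub_sub_cancel_right]

theorem kernelForm_eq_lintegral_translates {L : G → ℝ≥0∞} (hL : Measurable L)
    (hL1 : ∫⁻ θ, L θ ∂μ = 1) {K V : G → ℝ≥0∞} (hK : Measurable K) (hV : Measurable V) :
    kernelForm μ K V =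
      ∫⁻ p, K (p.1 - p.2) * ∫⁻ θ, L θ * (V (p.1 - θ) * V (p.2 - θ)) ∂μ ∂μ.prod μ := by
  calc kernelForm μ K V = ∫⁻ θ, L θ * kernelForm μ K (fun x => V (x - θ)) ∂μ := by
        simp only [kernelForm_comp_sub_right hK hV, lintegral_mul_const _ hL, hL1, one_mul]
    _ = ∫⁻ θ, ∫⁻ p, L θ * (K (p.1 - p.2) * (V (p.1 - θ) * V (p.2 - θ))) ∂μ.prod μ ∂μ := by
        refine lintegral_congr fun θ => ?_
        rw [kernelForm, lintegral_const_mul _ (by fun_prop)]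
    _ = _ := by
        rw [lintegral_lintegral_swap (by fun_prop)]
        refine lintegral_congr fun p => ?_
        rw [← lintegral_const_mul _ (by fun_prop)]
        exact lintegral_congr fun θ => by ring

theorem kernelForm_le_of_sq_ae_eq_conv [μ.IsNegInvariant] {K L P U : G → ℝ≥0∞}
    (hK : Measurable K) (hL : Measurable L) (hP : Measurable P) (hL1 : ∫⁻ θ, L θ ∂μ = 1)
    (hU : ∀ᵐ x ∂μ, U x ^ 2 = ∫⁻ z, L (x - z) * P z ^ 2 ∂μ) :
    kernelForm μ K P ≤ kernelForm μ K U := by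
  have hU' : ∀ᵐ x ∂μ, (∫⁻ z, L (x - z) * P z ^ 2 ∂μ) ^ (1 / 2 : ℝ) = U x := by
    filter_upwards [hU] with x hx
    rw [← hx, ← ENNReal.rpow_natCast, ← ENNReal.rpow_mul]
    norm_num
  rw [kernelForm_eq_lintegral_translates hL hL1 hK hP, kernelForm]
  refine lintegral_mono_ae ?_
  filter_upwards [Measure.quasiMeasurePreserving_fst.ae hU',
    Measure.quasiMeasurePreserving_snd.ae hU'] with p hx hy
  gcongr
  calc ∫⁻ θ, L θ * (P (p.1 - θ) * P (p.2 - θ)) ∂μ ≤ _ := lintegral_translates_le hL hP p.1 p.2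
    _ = U p.1 * U p.2 := by rw [hx, hy]

end

section Euclidean

variable {d : ℕ}

theorem convF_nonneg {g u : Euc d → ℝ} (hg0 : ∀ z, 0 ≤ g z) (hu0 : ∀ x, 0 ≤ u x) (x : Euc d) :
    0 ≤ convF d g u x :=
  integral_nonneg fun _ => mul_nonneg (hg0 _) (hu0 _)

theorem convF_eq_toReal_lintegral {g u : Euc d → ℝ} (hg : Measurable g) (hg0 : ∀ z, 0 ≤ g z)
    (hu : Measurable u) (hu0 : ∀ x, 0 ≤ u x) (x : Euc d) :
    convF d g u x = (∫⁻ z, ENNReal.ofReal (g (x - z)) * ENNReal.ofReal (u z)).toReal := by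
  rw [convF, integral_eq_lintegral_of_nonneg_ae
    (ae_of_all _ fun z => mul_nonneg (hg0 _) (hu0 _)) (by fun_prop)]
  simp_rw [ENNReal.ofReal_mul (hg0 _)]

theorem measurable_convF {g u : Euc d → ℝ} (hg : Measurable g) (hg0 : ∀ z, 0 ≤ g z)
    (hu : Measurable u) (hu0 : ∀ x, 0 ≤ u x) : Measurable (convF d g u) := by
  rw [funext (convF_eq_toReal_lintegral hg hg0 hu hu0)]
  fun_prop

theorem marg_eq_convF {f p : Euc d → ℝ} (hf : Measurable f) (hf0 : ∀ z, 0 ≤ f z)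
    (hp : Measurable p) (hp0 : ∀ θ, 0 ≤ p θ) : marg d f p = convF d f p := by
  funext x
  rw [marg, margE, convF_eq_toReal_lintegral hf hf0 hp hp0]
  simp_rw [ENNReal.ofReal_mul (hf0 _)]

theorem integral_mul_sub_convF {g v : Euc d → ℝ} (hg : Measurable g) (hg0 : ∀ z, 0 ≤ g z)
    (hg1 : ∫ z, g z = 1) (hv : Measurable v) (hv0 : ∀ x, 0 ≤ v x)
    (hv1 : ∫⁻ x, ENNReal.ofReal (v x) ^ 2 = 1) :
    ∫ x, v x * (v x - convF d g v x) =
      1 - (kernelForm volume (fun z => ENNReal.ofReal (g z))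
        fun x => ENNReal.ofReal (v x)).toReal := by
  set K : Euc d → ℝ≥0∞ := fun z => ENNReal.ofReal (g z)
  set V : Euc d → ℝ≥0∞ := fun x => ENNReal.ofReal (v x)
  have hform : ∫⁻ x, V x * ∫⁻ y, K (x - y) * V y = kernelForm volume K V := by
    rw [kernelForm, lintegral_prod _ (by fun_prop)]
    refine lintegral_congr fun x => ?_
    rw [← lintegral_const_mul _ (by fun_prop)]
    exact lintegral_congr fun y => by ring
  have hform_le : kernelForm volume K V ≤ 1 :=
    (kernelForm_le (by fun_prop) (by fun_prop)).trans_eq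
      (by rw [lintegral_ofReal_eq_one hg0 hg1, hv1, one_mul])
  have hsq : (fun x => v x * v x) = fun x => (V x ^ 2).toReal := by
    funext x
    rw [ENNReal.toReal_pow, ENNReal.toReal_ofReal (hv0 x), sq]
  have hcross : (fun x => v x * convF d g v x) =
      fun x => (V x * ∫⁻ y, K (x - y) * V y).toReal := by
    funext x
    rw [convF_eq_toReal_lintegral hg hg0 hv hv0, ENNReal.toReal_mul, ENNReal.toReal_ofReal (hv0 x)]
  have hsq_fin : ∫⁻ x, V x ^ 2 ≠ ∞ := by rw [hv1]; exact ENNReal.one_ne_top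
  have hcross_fin : ∫⁻ x, V x * ∫⁻ y, K (x - y) * V y ≠ ∞ := by
    rw [hform]; exact ne_top_of_le_ne_top ENNReal.one_ne_top hform_le
  simp_rw [mul_sub]
  rw [integral_sub (hsq ▸ integrable_toReal_of_lintegral_ne_top (by fun_prop) hsq_fin)
      (hcross ▸ integrable_toReal_of_lintegral_ne_top (by fun_prop) hcross_fin),
    hsq, hcross, integral_toReal (by fun_prop) (ae_lt_top' (by fun_prop) hsq_fin),
    integral_toReal (by fun_prop) (ae_lt_top' (by fun_prop) hcross_fin), hv1, hform,
    ENNReal.toReal_one]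

theorem integral_sqrt_convF_mul_sub_le {gs gt p : Euc d → ℝ} (hgs : Measurable gs)
    (hgs0 : ∀ z, 0 ≤ gs z) (hgs1 : ∫ z, gs z = 1) (hgt : Measurable gt) (hgt0 : ∀ z, 0 ≤ gt z)
    (hgt1 : ∫ z, gt z = 1) (hp : Measurable p) (hp0 : ∀ x, 0 ≤ p x) (hp1 : ∫ x, p x = 1) :
    ∫ x, √(convF d gt p x) * (√(convF d gt p x) - convF d gs (fun y => √(convF d gt p y)) x) ≤
      ∫ x, √(p x) * (√(p x) - convF d gs (fun y => √(p y)) x) := by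
  set P : Euc d → ℝ≥0∞ := fun x => ENNReal.ofReal √(p x)
  set U : Euc d → ℝ≥0∞ := fun x => ENNReal.ofReal √(convF d gt p x)
  set L : Euc d → ℝ≥0∞ := fun z => ENNReal.ofReal (gt z)
  have hconv := measurable_convF hgt hgt0 hp hp0
  have hP2 (x : Euc d) : P x ^ 2 = ENNReal.ofReal (p x) := by
    rw [← ENNReal.ofReal_pow (Real.sqrt_nonneg _), Real.sq_sqrt (hp0 x)]
  have hP1 : ∫⁻ x, P x ^ 2 = 1 := by simp_rw [hP2]; exact lintegral_ofReal_eq_one hp0 hp1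
  have hsmooth1 : ∫⁻ x, ∫⁻ z, L (x - z) * P z ^ 2 = 1 := by
    rw [← lintegral_prod (fun q : Euc d × Euc d => L (q.1 - q.2) * P q.2 ^ 2) (by fun_prop),
      lintegral_prod_sub_mul_snd (F := fun z => P z ^ 2) (by fun_prop) (by fun_prop), hP1,
      lintegral_ofReal_eq_one hgt0 hgt1, one_mul]
  have hU2 : ∀ᵐ x, U x ^ 2 = ∫⁻ z, L (x - z) * P z ^ 2 := by
    filter_upwards [ae_lt_top (by fun_prop) (hsmooth1 ▸ ENNReal.one_ne_top)] with x hx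
    rw [← ENNReal.ofReal_pow (Real.sqrt_nonneg _), Real.sq_sqrt (convF_nonneg hgt0 hp0 x),
      convF_eq_toReal_lintegral hgt hgt0 hp hp0]
    simp_rw [← hP2] at hx ⊢
    exact ENNReal.ofReal_toReal hx.ne
  have hU1 : ∫⁻ x, U x ^ 2 = 1 := by rw [lintegral_congr_ae hU2, hsmooth1]
  rw [integral_mul_sub_convF hgs hgs0 hgs1 (by fun_prop) (fun _ => Real.sqrt_nonneg _) hU1,
    integral_mul_sub_convF hgs hgs0 hgs1 (by fun_prop) (fun _ => Real.sqrt_nonneg _) hP1]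
  gcongr 1 - ?_
  refine ENNReal.toReal_mono ?_ (kernelForm_le_of_sq_ae_eq_conv (by fun_prop) (by fun_prop)
    (by fun_prop) (lintegral_ofReal_eq_one hgt0 hgt1) hU2)
  refine ne_top_of_le_ne_top ENNReal.one_ne_top
    ((kernelForm_le (by fun_prop) (by fun_prop)).trans_eq ?_)
  rw [lintegral_ofReal_eq_one hgs0 hgs1, hU1, one_mul]

theorem energy_le_energy_of_integral_le {g : ℝ → Euc d → ℝ} {u v : Euc d → ℝ}
    (h : ∀ s, 0 < s →
      ∫ x, u x * (u x - convF d (g s) u x) ≤ ∫ x, v x * (v x - convF d (g s) v x)) :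
    energy d g u ≤ energy d g v :=
  iSup₂_mono fun s hs =>
    ENNReal.ofReal_le_ofReal (mul_le_mul_of_nonneg_left (h s hs) (by positivity))

theorem energy_sqrt_convF_le {g : ℝ → Euc d → ℝ} (hg_meas : ∀ t : ℝ, 0 < t → Measurable (g t))
    (hg_nonneg : ∀ t : ℝ, 0 < t → ∀ z, 0 ≤ g t z) (hg_prob : ∀ t : ℝ, 0 < t → ∫ z, g t z = 1)
    {p : Euc d → ℝ} (hp : Measurable p) (hp0 : ∀ x, 0 ≤ p x) (hp1 : ∫ x, p x = 1) {t : ℝ}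
    (ht : 0 < t) :
    energy d g (fun x => √(convF d (g t) p x)) ≤ energy d g (fun x => √(p x)) :=
  energy_le_energy_of_integral_le fun s hs =>
    integral_sqrt_convF_mul_sub_le (hg_meas s hs) (hg_nonneg s hs) (hg_prob s hs)
      (hg_meas t ht) (hg_nonneg t ht) (hg_prob t ht) hp hp0 hp1

end Euclidean

theorem energy_monotone_along_semigroup_general
    (d : ℕ) (f : Euc d → ℝ) (g : ℝ → Euc d → ℝ)
    (hg_meas : ∀ t : ℝ, 0 < t → Measurable (g t))
    (hg_nonneg : ∀ t : ℝ, 0 < t → ∀ z, 0 ≤ g t z)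
    (hg_prob : ∀ t : ℝ, 0 < t → ∫ z, g t z = 1) :
    (∀ prio : Euc d → ℝ, Measurable prio → (∀ θ, 0 ≤ prio θ) →
      (∫ θ, prio θ) = 1 → ∀ t : ℝ, 0 < t →
      energy d g (fun x => Real.sqrt (convF d (g t) prio x)) ≤
        energy d g (fun x => Real.sqrt (prio x))) ∧
    ((∀ z, f (-z) = f z) → (∀ z, g (1 / 2) z = f z) →
      ∀ prio : Euc d → ℝ, Measurable prio → (∀ θ, 0 ≤ prio θ) →
      (∫ θ, prio θ) = 1 →
      energy d g (fun x => Real.sqrt (marg d f prio x)) ≤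
        energy d g (fun x => Real.sqrt (prio x))) := by
  refine ⟨fun prio hp hp0 hp1 t ht => energy_sqrt_convF_le hg_meas hg_nonneg hg_prob hp hp0 hp1 ht,
    fun _ hg_half prio hp hp0 hp1 => ?_⟩
  have hhalf : (0 : ℝ) < 1 / 2 := by norm_num
  obtain rfl : g (1 / 2) = f := funext hg_half
  rw [marg_eq_convF (hg_meas _ hhalf) (hg_nonneg _ hhalf) hp hp0]
  exact energy_sqrt_convF_le hg_meas hg_nonneg hg_prob hp hp0 hp1 hhalf

/-- energy monotonicity along the semigroup: for every probability
density `π` and every `t > 0`, `𝓔(√(g_t ⋆ π)) ≤ 𝓔(√π)`. In particular, if `f`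
is even and `g_{1/2} = f`, then `𝓔(√(M^π)) ≤ 𝓔(√π)`. -/
theorem energy_monotone_along_semigroup
    (d : ℕ) (hd : 1 ≤ d) (f : Euc d → ℝ) (g : ℝ → Euc d → ℝ)
    (hf_meas : Measurable f) (hf_nonneg : ∀ x, 0 ≤ f x)
    (hf_int : ∫ x, f x = 1)
    (hg_meas : ∀ t : ℝ, 0 < t → Measurable (g t))
    (hg_nonneg : ∀ t : ℝ, 0 < t → ∀ z, 0 ≤ g t z)
    (hg_prob : ∀ t : ℝ, 0 < t → ∫ z, g t z = 1)
    (hg_even : ∀ t : ℝ, 0 < t → ∀ z, g t (-z) = g t z)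
    (hg_semigroup : ∀ s t : ℝ, 0 < s → 0 < t →
      ∀ᵐ z ∂(volume : Measure (Euc d)), convF d (g s) (g t) z = g (s + t) z)
    (hg_one : ∀ z, g 1 z = ∫ η, f η * f (η - z)) :
    (∀ prio : Euc d → ℝ, Measurable prio → (∀ θ, 0 ≤ prio θ) →
      (∫ θ, prio θ) = 1 → ∀ t : ℝ, 0 < t →
      energy d g (fun x => Real.sqrt (convF d (g t) prio x)) ≤
        energy d g (fun x => Real.sqrt (prio x))) ∧
    ((∀ z, f (-z) = f z) → (∀ z, g (1 / 2) z = f z) →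
      ∀ prio : Euc d → ℝ, Measurable prio → (∀ θ, 0 ≤ prio θ) →
      (∫ θ, prio θ) = 1 →
      energy d g (fun x => Real.sqrt (marg d f prio x)) ≤
        energy d g (fun x => Real.sqrt (prio x))) :=
  energy_monotone_along_semigroup_general d f g hg_meas hg_nonneg hg_prob
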